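/- If a sequent Π → C of size n, in which ! is applied only to variables, is derivable in !L*, then it has a cut-free derivation of total size less than 12n² + 3n. -/

import Mathlib

/-!
A derivation can only be long because of chains of permutation steps, so the derivation is
rebuilt with every axiom, logical rule and contraction followed by at most `2ℓ` permutations,
`ℓ` the length of the antecedent reached: first all banged formulas are moved to the end, then
each is inserted where it belongs. Going upwards only right rules and contractions lengthen the
antecedent, and `|Φ| + #right rules + #contractions = #binary rules + 1`. As `!` guards only
variables, contraction duplicates no connective, so every division of the end sequent is
introduced at most once and every bang at most once per contraction. Hence `ℓ ≤ (n + 1) / 2` and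
there are at most `2n + 1` non-permutation rules, for a size of at most `(n + 2)(2n + 1)`.
-/

/-- Formulae (types) of the Lambek calculus with a modality:
`var` = primitive type, `div B A` = B / A, `ldiv A B` = A \ B, `bang A` = !A. -/
inductive Fm : Type
  | var : ℕ → Fm
  | div : Fm → Fm → Fm
  | ldiv : Fm → Fm → Fm
  | bang : Fm → Fm
  deriving DecidableEq

open Fm

/-- The size of a formula: the total number of variable and connective occurrences. -/
def Fm.size : Fm → ℕ
  | var _ => 1
  | div a b => a.size + b.size + 1
  | ldiv a b => a.size + b.size + 1
  | bang a => a.size + 1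

/-- The size of a sequent Φ → C. -/
def seqSize (Φ : List Fm) (C : Fm) : ℕ := (Φ.map Fm.size).sum + C.size

/-- `!` is applied only to variables (primitive types) in the formula. -/
def bangVar : Fm → Prop
  | var _ => True
  | div a b => bangVar a ∧ bangVar b
  | ldiv a b => bangVar a ∧ bangVar b
  | bang a => ∃ n : ℕ, a = var n

/-- Cut-free derivation trees in !L*. -/
inductive BangD : List Fm → Fm → Type
  | ax (A : Fm) : BangD [A] A
  | divL (Γ Δ₁ Δ₂ : List Fm) (A B C : Fm) :
      BangD Γ A → BangD (Δ₁ ++ B :: Δ₂) C →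
      BangD (Δ₁ ++ div B A :: (Γ ++ Δ₂)) C
  | divR (Γ : List Fm) (A B : Fm) :
      BangD (Γ ++ [A]) B → BangD Γ (div B A)
  | ldivL (Γ Δ₁ Δ₂ : List Fm) (A B C : Fm) :
      BangD Γ A → BangD (Δ₁ ++ B :: Δ₂) C →
      BangD (Δ₁ ++ Γ ++ ldiv A B :: Δ₂) C
  | ldivR (Γ : List Fm) (A B : Fm) :
      BangD (A :: Γ) B → BangD Γ (ldiv A B)
  | bangL (Γ₁ Γ₂ : List Fm) (A C : Fm) :
      BangD (Γ₁ ++ A :: Γ₂) C → BangD (Γ₁ ++ bang A :: Γ₂) C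
  | bangR (Γ : List Fm) (B : Fm) :
      BangD (Γ.map bang) B → BangD (Γ.map bang) (bang B)
  | perm1 (Δ₁ Γ Δ₂ : List Fm) (A C : Fm) :
      BangD (Δ₁ ++ bang A :: (Γ ++ Δ₂)) C → BangD (Δ₁ ++ Γ ++ bang A :: Δ₂) C
  | perm2 (Δ₁ Γ Δ₂ : List Fm) (A C : Fm) :
      BangD (Δ₁ ++ Γ ++ bang A :: Δ₂) C → BangD (Δ₁ ++ bang A :: (Γ ++ Δ₂)) C
  | contr (Δ₁ Δ₂ : List Fm) (A C : Fm) :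
      BangD (Δ₁ ++ bang A :: bang A :: Δ₂) C → BangD (Δ₁ ++ bang A :: Δ₂) C

/-- Number of applications of logical rules (all rules except permutation and contraction). -/
def BangD.logicalCount : ∀ {Φ : List Fm} {C : Fm}, BangD Φ C → ℕ
  | _, _, BangD.ax _ => 0
  | _, _, BangD.divL _ _ _ _ _ _ d e => d.logicalCount + e.logicalCount + 1
  | _, _, BangD.divR _ _ _ d => d.logicalCount + 1
  | _, _, BangD.ldivL _ _ _ _ _ _ d e => d.logicalCount + e.logicalCount + 1
  | _, _, BangD.ldivR _ _ _ d => d.logicalCount + 1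
  | _, _, BangD.bangL _ _ _ _ d => d.logicalCount + 1
  | _, _, BangD.bangR _ _ d => d.logicalCount + 1
  | _, _, BangD.perm1 _ _ _ _ _ d => d.logicalCount
  | _, _, BangD.perm2 _ _ _ _ _ d => d.logicalCount
  | _, _, BangD.contr _ _ _ _ d => d.logicalCount

/-- Number of applications of the contraction rule. -/
def BangD.contrCount : ∀ {Φ : List Fm} {C : Fm}, BangD Φ C → ℕ
  | _, _, BangD.ax _ => 0
  | _, _, BangD.divL _ _ _ _ _ _ d e => d.contrCount + e.contrCount
  | _, _, BangD.divR _ _ _ d => d.contrCount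
  | _, _, BangD.ldivL _ _ _ _ _ _ d e => d.contrCount + e.contrCount
  | _, _, BangD.ldivR _ _ _ d => d.contrCount
  | _, _, BangD.bangL _ _ _ _ d => d.contrCount
  | _, _, BangD.bangR _ _ d => d.contrCount
  | _, _, BangD.perm1 _ _ _ _ _ d => d.contrCount
  | _, _, BangD.perm2 _ _ _ _ _ d => d.contrCount
  | _, _, BangD.contr _ _ _ _ d => d.contrCount + 1

/-- The total size of a derivation: the number of axiom instances and rule
applications (i.e. of sequent occurrences) in it. -/
def BangD.dsize : ∀ {Φ : List Fm} {C : Fm}, BangD Φ C → ℕ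
  | _, _, BangD.ax _ => 1
  | _, _, BangD.divL _ _ _ _ _ _ d e => d.dsize + e.dsize + 1
  | _, _, BangD.divR _ _ _ d => d.dsize + 1
  | _, _, BangD.ldivL _ _ _ _ _ _ d e => d.dsize + e.dsize + 1
  | _, _, BangD.ldivR _ _ _ d => d.dsize + 1
  | _, _, BangD.bangL _ _ _ _ d => d.dsize + 1
  | _, _, BangD.bangR _ _ d => d.dsize + 1
  | _, _, BangD.perm1 _ _ _ _ _ d => d.dsize + 1
  | _, _, BangD.perm2 _ _ _ _ _ d => d.dsize + 1
  | _, _, BangD.contr _ _ _ _ d => d.dsize + 1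

namespace Fm

def ndiv : Fm → ℕ
  | var _ => 0
  | div a b => a.ndiv + b.ndiv + 1
  | ldiv a b => a.ndiv + b.ndiv + 1
  | bang a => a.ndiv

def nbang : Fm → ℕ
  | var _ => 0
  | div a b => a.nbang + b.nbang
  | ldiv a b => a.nbang + b.nbang
  | bang a => a.nbang + 1

def isBang : Fm → Bool
  | bang _ => true
  | _ => false

theorem size_eq_ndiv_nbang (F : Fm) : F.size = 2 * F.ndiv + F.nbang + 1 := by
  induction F <;> simp only [size, ndiv, nbang] <;> omega

end Fm

def seqDiv (Φ : List Fm) (C : Fm) : ℕ := (Φ.map Fm.ndiv).sum + C.ndiv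

def seqBang (Φ : List Fm) (C : Fm) : ℕ := (Φ.map Fm.nbang).sum + C.nbang

theorem seqSize_eq_seqDiv_seqBang (Φ : List Fm) (C : Fm) :
    seqSize Φ C = 2 * seqDiv Φ C + seqBang Φ C + Φ.length + 1 := by
  induction Φ with
  | nil => simp [seqSize, seqDiv, seqBang, Fm.size_eq_ndiv_nbang]
  | cons A Ψ ih => simp_all [seqSize, seqDiv, seqBang, Fm.size_eq_ndiv_nbang]; omega

def BangVarSeq (Φ : List Fm) (C : Fm) : Prop := ∀ F ∈ C :: Φ, bangVar F

-- Antecedents interconvertible by the rules perm₁,₂.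
def BangPerm (Φ Ψ : List Fm) : Prop :=
  Φ.Perm Ψ ∧ Φ.filter (!isBang ·) = Ψ.filter (!isBang ·)

namespace BangPerm

theorem refl (Φ : List Fm) : BangPerm Φ Φ := ⟨.refl Φ, rfl⟩

theorem symm {Φ Ψ : List Fm} (h : BangPerm Φ Ψ) : BangPerm Ψ Φ := ⟨h.1.symm, h.2.symm⟩

theorem trans {Φ Ψ Θ : List Fm} (h₁ : BangPerm Φ Ψ) (h₂ : BangPerm Ψ Θ) : BangPerm Φ Θ :=
  ⟨h₁.1.trans h₂.1, h₁.2.trans h₂.2⟩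

theorem move (Δ₁ Γ Δ₂ : List Fm) (A : Fm) :
    BangPerm (Δ₁ ++ Γ ++ bang A :: Δ₂) (Δ₁ ++ bang A :: (Γ ++ Δ₂)) := by
  refine ⟨?_, by simp [isBang]⟩
  rw [List.append_assoc]
  exact List.perm_middle.append_left Δ₁

end BangPerm

namespace BangD

def rightCount : ∀ {Φ : List Fm} {C : Fm}, BangD Φ C → ℕ
  | _, _, ax _ => 0
  | _, _, divL _ _ _ _ _ _ d e => d.rightCount + e.rightCount
  | _, _, divR _ _ _ d => d.rightCount + 1
  | _, _, ldivL _ _ _ _ _ _ d e => d.rightCount + e.rightCount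
  | _, _, ldivR _ _ _ d => d.rightCount + 1
  | _, _, bangL _ _ _ _ d => d.rightCount
  | _, _, bangR _ _ d => d.rightCount
  | _, _, perm1 _ _ _ _ _ d => d.rightCount
  | _, _, perm2 _ _ _ _ _ d => d.rightCount
  | _, _, contr _ _ _ _ d => d.rightCount

def binaryCount : ∀ {Φ : List Fm} {C : Fm}, BangD Φ C → ℕ
  | _, _, ax _ => 0
  | _, _, divL _ _ _ _ _ _ d e => d.binaryCount + e.binaryCount + 1
  | _, _, divR _ _ _ d => d.binaryCount
  | _, _, ldivL _ _ _ _ _ _ d e => d.binaryCount + e.binaryCount + 1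
  | _, _, ldivR _ _ _ d => d.binaryCount
  | _, _, bangL _ _ _ _ d => d.binaryCount
  | _, _, bangR _ _ d => d.binaryCount
  | _, _, perm1 _ _ _ _ _ d => d.binaryCount
  | _, _, perm2 _ _ _ _ _ d => d.binaryCount
  | _, _, contr _ _ _ _ d => d.binaryCount

theorem length_add_rightCount_add_contrCount {Φ : List Fm} {C : Fm} (d : BangD Φ C) :
    Φ.length + d.rightCount + d.contrCount = d.binaryCount + 1 := by
  induction d <;> simp_all only [rightCount, contrCount, binaryCount, List.length_append,
    List.length_cons, List.length_map, List.length_nil] <;> omega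

theorem binaryCount_add_rightCount_le {Φ : List Fm} {C : Fm} (d : BangD Φ C) :
    BangVarSeq Φ C → d.binaryCount + d.rightCount ≤ seqDiv Φ C := by
  induction d <;> intro hv <;>
    simp only [BangVarSeq, List.forall_mem_cons, List.forall_mem_append, bangVar] at * <;>
    casesm* _ ∧ _, ∃ _, _ <;> subst_vars <;>
    simp_all [bangVar, rightCount, binaryCount, seqDiv, Fm.ndiv] <;> omega

theorem logicalCount_le {Φ : List Fm} {C : Fm} (d : BangD Φ C) :
    BangVarSeq Φ C →
      d.logicalCount ≤ d.binaryCount + d.rightCount + seqBang Φ C + d.contrCount := by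
  induction d <;> intro hv <;>
    simp only [BangVarSeq, List.forall_mem_cons, List.forall_mem_append, bangVar] at * <;>
    casesm* _ ∧ _, ∃ _, _ <;> subst_vars <;>
    simp_all [bangVar, rightCount, binaryCount, logicalCount, contrCount, seqBang, Fm.nbang] <;> omega

def cast {Φ Ψ : List Fm} {C : Fm} (h : Φ = Ψ) (d : BangD Φ C) : BangD Ψ C := h ▸ d

@[simp] theorem dsize_cast {Φ Ψ : List Fm} {C : Fm} (h : Φ = Ψ) (d : BangD Φ C) :
    (d.cast h).dsize = d.dsize := by
  subst h; rfl

theorem exists_bangs_last {C : Fm} (Φ : List Fm) :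
    ∀ (Ξ : List Fm) (d : BangD (Ξ ++ Φ) C),
      ∃ e : BangD (Ξ ++ Φ.filter (!isBang ·) ++ Φ.filter isBang) C,
        e.dsize ≤ d.dsize + Φ.length := by
  induction Φ with
  | nil => exact fun Ξ d => ⟨d.cast (by simp), by simp only [dsize_cast, List.length_nil, add_zero, le_refl]⟩
  | cons A Ψ ih =>
    intro Ξ d
    obtain ⟨e, he⟩ := ih (Ξ ++ [A]) (d.cast (by simp))
    by_cases hA : A.isBang
    · obtain ⟨a, rfl⟩ : ∃ a, A = bang a := by cases A <;> simp_all [isBang]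
      refine ⟨(perm1 Ξ (Ψ.filter (!isBang ·)) (Ψ.filter isBang) a C (e.cast (by simp))).cast
        (by simp [isBang, List.filter_cons]), ?_⟩
      simp only [dsize_cast, dsize, List.length_cons] at he ⊢
      omega
    · exact ⟨e.cast (by simp [hA]), by simp only [dsize_cast, List.length_cons] at he ⊢; omega⟩

theorem exists_of_bangs_last {C : Fm} (Φ : List Fm) :
    ∀ (Bs Ξ : List Fm), Bs.Perm (Φ.filter isBang) →
      ∀ d : BangD (Ξ ++ Φ.filter (!isBang ·) ++ Bs) C,
        ∃ e : BangD (Ξ ++ Φ) C, e.dsize ≤ d.dsize + Bs.length := by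
  induction Φ with
  | nil =>
    intro Bs Ξ hBs d
    obtain rfl : Bs = [] := hBs.eq_nil
    exact ⟨d.cast (by simp), by simp only [dsize_cast, List.length_nil, add_zero, le_refl]⟩
  | cons A Ψ ih =>
    intro Bs Ξ hBs d
    by_cases hA : A.isBang
    · obtain ⟨a, rfl⟩ : ∃ a, A = bang a := by cases A <;> simp_all [isBang]
      obtain ⟨B₁, B₂, rfl⟩ := List.append_of_mem (a := bang a) (hBs.mem_iff.mpr (by simp [isBang]))
      have hB : (B₁ ++ B₂).Perm (Ψ.filter isBang) := by
        refine (List.perm_middle.symm.trans (hBs.trans ?_)).cons_inv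
        rw [List.filter_cons_of_pos hA]
      obtain ⟨e, he⟩ := ih (B₁ ++ B₂) (Ξ ++ [bang a]) hB
        ((perm2 Ξ (Ψ.filter (!isBang ·) ++ B₁) B₂ a C (d.cast (by simp [isBang]))).cast
          (by simp))
      refine ⟨e.cast (by simp), ?_⟩
      simp only [dsize_cast, dsize, List.length_append, List.length_cons] at he ⊢
      omega
    · obtain ⟨e, he⟩ := ih Bs (Ξ ++ [A]) (by simpa [hA] using hBs) (d.cast (by simp [hA]))
      exact ⟨e.cast (by simp), by simp only [dsize_cast] at he ⊢; omega⟩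

theorem exists_of_bangPerm {Φ Ψ : List Fm} {C : Fm} (d : BangD Φ C) (h : BangPerm Ψ Φ) :
    ∃ e : BangD Ψ C, e.dsize ≤ d.dsize + 2 * Ψ.length := by
  obtain ⟨e₁, he₁⟩ := exists_bangs_last Φ [] (d.cast (by simp))
  obtain ⟨e₂, he₂⟩ := exists_of_bangs_last Ψ (Φ.filter isBang) [] (h.1.filter isBang).symm
    (e₁.cast (by rw [h.2]))
  refine ⟨e₂.cast (by simp), ?_⟩
  have := h.1.length_eq
  have := Φ.length_filter_le isBang
  simp only [dsize_cast] at he₁ he₂ ⊢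
  omega

theorem exists_of_bangPerm_of_dsize_le {Φ Ψ : List Fm} {C : Fm} (d : BangD Φ C)
    (h : BangPerm Ψ Φ) {M N : ℕ} (hΦ : Φ.length ≤ M) (hd : d.dsize + 2 * M ≤ (2 * M + 1) * N) :
    ∃ e : BangD Ψ C, e.dsize ≤ (2 * M + 1) * N := by
  obtain ⟨e, he⟩ := d.exists_of_bangPerm h
  exact ⟨e, by rw [h.1.length_eq] at he; omega⟩

-- `hM` makes `M` a bound on the length of every antecedent in `d`.
theorem exists_dsize_le {Φ : List Fm} {C : Fm} (d : BangD Φ C) {M : ℕ}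
    (hM : Φ.length + d.rightCount + d.contrCount ≤ M) {Ψ : List Fm} (h : BangPerm Ψ Φ) :
    ∃ e : BangD Ψ C,
      e.dsize ≤ (2 * M + 1) * (d.logicalCount + d.contrCount + d.binaryCount + 1) := by
  induction d generalizing Ψ <;> simp only [rightCount, contrCount, logicalCount, binaryCount,
    List.length_append, List.length_cons] at hM ⊢
  case ax A =>
    obtain rfl := List.perm_singleton.mp h.1
    exact ⟨ax A, by simp [dsize]⟩
  case divL Γ Δ₁ Δ₂ A B C d₁ d₂ ih₁ ih₂ =>
    obtain ⟨e₁, he₁⟩ := ih₁ (by omega) (.refl _)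
    obtain ⟨e₂, he₂⟩ := ih₂ (by simp; omega) (.refl _)
    refine (divL Γ Δ₁ Δ₂ A B C e₁ e₂).exists_of_bangPerm_of_dsize_le h (by simp; omega) ?_
    simp only [dsize]
    linarith
  case ldivL Γ Δ₁ Δ₂ A B C d₁ d₂ ih₁ ih₂ =>
    obtain ⟨e₁, he₁⟩ := ih₁ (by omega) (.refl _)
    obtain ⟨e₂, he₂⟩ := ih₂ (by simp; omega) (.refl _)
    refine (ldivL Γ Δ₁ Δ₂ A B C e₁ e₂).exists_of_bangPerm_of_dsize_le h (by simp; omega) ?_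
    simp only [dsize]
    linarith
  case divR Γ A B d₁ ih₁ =>
    obtain ⟨e₁, he₁⟩ := ih₁ (by simp; omega) (.refl _)
    refine (divR Γ A B e₁).exists_of_bangPerm_of_dsize_le h (by omega) ?_
    simp only [dsize]
    linarith
  case ldivR Γ A B d₁ ih₁ =>
    obtain ⟨e₁, he₁⟩ := ih₁ (by simp; omega) (.refl _)
    refine (ldivR Γ A B e₁).exists_of_bangPerm_of_dsize_le h (by omega) ?_
    simp only [dsize]
    linarith
  case bangL Γ₁ Γ₂ A C d₁ ih₁ =>
    obtain ⟨e₁, he₁⟩ := ih₁ (by simp; omega) (.refl _)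
    refine (bangL Γ₁ Γ₂ A C e₁).exists_of_bangPerm_of_dsize_le h (by simp; omega) ?_
    simp only [dsize]
    linarith
  case bangR Γ B d₁ ih₁ =>
    obtain ⟨e₁, he₁⟩ := ih₁ hM (.refl _)
    refine (bangR Γ B e₁).exists_of_bangPerm_of_dsize_le h (by omega) ?_
    simp only [dsize]
    linarith
  case contr Δ₁ Δ₂ A C d₁ ih₁ =>
    obtain ⟨e₁, he₁⟩ := ih₁ (by simp; omega) (.refl _)
    refine (contr Δ₁ Δ₂ A C e₁).exists_of_bangPerm_of_dsize_le h (by simp; omega) ?_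
    simp only [dsize]
    linarith
  case perm1 Δ₁ Γ Δ₂ A C d₁ ih₁ =>
    exact ih₁ (by simp; omega) (h.trans (.move Δ₁ Γ Δ₂ A))
  case perm2 Δ₁ Γ Δ₂ A C d₁ ih₁ =>
    exact ih₁ (by simp; omega) (h.trans (BangPerm.move Δ₁ Γ Δ₂ A).symm)

end BangD

/-- Every !L*-derivable sequent of size n in which ! is applied only to
variables has a cut-free derivation of size less than 12n² + 3n. -/
theorem stmt14 (Φ : List Fm) (C : Fm) (h : Nonempty (BangD Φ C))
    (hv : ∀ F ∈ C :: Φ, bangVar F) :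
    ∃ d : BangD Φ C, d.dsize < 12 * (seqSize Φ C) ^ 2 + 3 * seqSize Φ C := by
  obtain ⟨d⟩ := h
  have hdiv := d.binaryCount_add_rightCount_le hv
  have hlog := d.logicalCount_le hv
  have hlen := d.length_add_rightCount_add_contrCount
  have hsize := seqSize_eq_seqDiv_seqBang Φ C
  obtain ⟨e, he⟩ := d.exists_dsize_le le_rfl (.refl Φ)
  refine ⟨e, he.trans_lt ?_⟩
  calc _ ≤ (seqSize Φ C + 2) * (2 * seqSize Φ C + 1) := Nat.mul_le_mul (by omega) (by omega)
    _ < _ := by nlinarith
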